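/- arXiv:1408.0890 — 3 statements merged into one kernel-verified Lean document; each statement's English description precedes it below -/
import Mathlib

section
/- Any two cores of a finite relational structure are isomorphic. -/
structure Vocab where
  symb : Type
  ar : symb → ℕ

structure Struct (τ : Vocab) (V : Type) where
  rel : ∀ R : τ.symb, Set ((Fin (τ.ar R)) → V)

def IsHom {τ : Vocab} {V W : Type} (A : Struct τ V) (B : Struct τ W) (h : V → W) : Prop :=
  ∀ R t, t ∈ A.rel R → (fun i => h (t i)) ∈ B.rel R

def HomEquiv {τ : Vocab} {V W : Type} (A : Struct τ V) (B : Struct τ W) : Prop :=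
  (∃ h, IsHom A B h) ∧ (∃ h, IsHom B A h)

structure Substruct {τ : Vocab} {V : Type} (A : Struct τ V) where
  carrier : Set V
  rel : ∀ R : τ.symb, Set ((Fin (τ.ar R)) → V)
  rel_sub : ∀ R, rel R ⊆ A.rel R
  mem_carrier : ∀ R t, t ∈ rel R → ∀ i, t i ∈ carrier

def Substruct.toStruct {τ : Vocab} {V : Type} {A : Struct τ V} (B : Substruct A) :
    Struct τ B.carrier :=
  ⟨fun R => {t | (fun i => (t i : V)) ∈ B.rel R}⟩

def Substruct.Proper {τ : Vocab} {V : Type} {A : Struct τ V} (B : Substruct A) : Prop :=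
  ¬ (B.carrier = Set.univ ∧ ∀ R, B.rel R = A.rel R)

def IsCore {τ : Vocab} {V : Type} (A : Struct τ V) : Prop :=
  ∀ B : Substruct A, B.Proper → ¬ HomEquiv A B.toStruct

def IsCoreOf {τ : Vocab} {V : Type} {A : Struct τ V} (B : Substruct A) : Prop :=
  HomEquiv A B.toStruct ∧ IsCore B.toStruct

def Isomorphic {τ : Vocab} {V W : Type} (A : Struct τ V) (B : Struct τ W) : Prop :=
  ∃ e : V ≃ W, IsHom A B e ∧ IsHom B A e.symm

def homSet {τ : Vocab} {V W : Type} (A : Struct τ V) (B : Struct τ W) (S : Set V) :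
    Set (S → W) :=
  {h | ∃ h' : V → W, IsHom A B h' ∧ ∀ a : S, h' a = h a}

lemma IsHom.comp {τ : Vocab} {U V W : Type} {A : Struct τ U} {B : Struct τ V}
    {C : Struct τ W} {h1 : U → V} {h2 : V → W} (H1 : IsHom A B h1) (H2 : IsHom B C h2) :
    IsHom A C (h2 ∘ h1) := fun R t ht => H2 R _ (H1 R t ht)

lemma core_hom_inv {τ : Vocab} {W : Type} [Finite W] {C : Struct τ W}
    (hC : IsCore C) {e : W → W} (he : IsHom C C e) :
    ∃ e' : W → W, IsHom C C e' ∧ (∀ x, e' (e x) = x) ∧ (∀ x, e (e' x) = x) := by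
  classical
  set Im : Substruct C :=
    { carrier := Set.range e
      rel := fun R => (fun t => e ∘ t) '' C.rel R
      rel_sub := by
        rintro R t ⟨s, hs, rfl⟩
        exact he R s hs
      mem_carrier := by
        rintro R t ⟨s, hs, rfl⟩ i
        exact ⟨s i, rfl⟩ } with hIm
  have hHE : HomEquiv C Im.toStruct := by
    constructor
    · refine ⟨fun x => ⟨e x, ⟨x, rfl⟩⟩, ?_⟩
      intro R t ht
      exact ⟨t, ht, rfl⟩
    · refine ⟨Subtype.val, ?_⟩
      intro R t ht
      exact Im.rel_sub R ht
  have hnp : ¬ Im.Proper := fun hp => hC Im hp hHE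
  rw [Substruct.Proper, not_not] at hnp
  obtain ⟨hcar, hrel⟩ := hnp
  have hsurj : Function.Surjective e := by
    intro x
    have : x ∈ Set.range e := by rw [show Set.range e = Im.carrier from rfl, hcar]; trivial
    exact this
  have hbij : Function.Bijective e := Finite.surjective_iff_bijective.mp hsurj
  set eq := Equiv.ofBijective e hbij with heq
  refine ⟨eq.symm, ?_, fun x => eq.symm_apply_apply x, fun x => eq.apply_symm_apply x⟩
  intro R t ht
  have : t ∈ Im.rel R := by rw [hrel R]; exact ht
  obtain ⟨s, hs, hst⟩ := this
  have : (fun i => eq.symm (t i)) = s := by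
    funext i
    have : t i = e (s i) := by rw [← hst]; rfl
    rw [this]
    exact eq.symm_apply_apply (s i)
  rw [this]
  exact hs

theorem stmt1 {τ : Vocab} {V : Type} [Fintype V] (A : Struct τ V)
    (B₁ B₂ : Substruct A) (h₁ : IsCoreOf B₁) (h₂ : IsCoreOf B₂) :
    Isomorphic B₁.toStruct B₂.toStruct := by
  classical
  obtain ⟨⟨⟨a, ha⟩, ⟨a', ha'⟩⟩, hc₁⟩ := h₁
  obtain ⟨⟨⟨b, hb⟩, ⟨b', hb'⟩⟩, hc₂⟩ := h₂
  set f : B₁.carrier → B₂.carrier := b ∘ a' with hf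
  have hfhom : IsHom B₁.toStruct B₂.toStruct f := ha'.comp hb
  set g : B₂.carrier → B₁.carrier := a ∘ b' with hg
  have hghom : IsHom B₂.toStruct B₁.toStruct g := hb'.comp ha
  have hgf : IsHom B₁.toStruct B₁.toStruct (g ∘ f) := hfhom.comp hghom
  have hfg : IsHom B₂.toStruct B₂.toStruct (f ∘ g) := hghom.comp hfhom
  obtain ⟨i₁, hi₁hom, hi₁l, hi₁r⟩ := core_hom_inv hc₁ hgf
  obtain ⟨i₂, hi₂hom, hi₂l, hi₂r⟩ := core_hom_inv hc₂ hfg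
  have hinj : Function.Injective f := by
    intro x y hxy
    have h := congrArg i₁ (congrArg g hxy)
    rw [show g (f x) = (g ∘ f) x from rfl, show g (f y) = (g ∘ f) y from rfl,
      hi₁l, hi₁l] at h
    exact h
  have hsurj : Function.Surjective f := by
    intro x
    exact ⟨g (i₂ x), hi₂r x⟩
  have hbij : Function.Bijective f := ⟨hinj, hsurj⟩
  refine ⟨Equiv.ofBijective f hbij, hfhom, ?_⟩
  have hsymm : ∀ x, (Equiv.ofBijective f hbij).symm x = i₁ (g x) := by
    intro x
    apply hinj
    have hx : f ((Equiv.ofBijective f hbij).symm x) = x :=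
      (Equiv.ofBijective f hbij).apply_symm_apply x
    rw [hx]
    obtain ⟨z, rfl⟩ := hsurj x
    show f z = f (i₁ (g (f z)))
    rw [show g (f z) = (g ∘ f) z from rfl, hi₁l z]
  intro R t ht
  have h2 : (fun i => i₁ (g (t i))) ∈ (Substruct.toStruct B₁).rel R := by
    have := hghom R t ht
    exact hi₁hom R _ this
  have : (fun i => (Equiv.ofBijective f hbij).symm (t i)) = fun i => i₁ (g (t i)) := by
    funext i; exact hsymm (t i)
  rw [this]
  exact h2
end

section
/- Let A be a finite relational structure, S a subset of its domain such that aug(A,S) is a core, and let g be a homomorphism from A to A with g(S) = S. Then g is an automorphism of A. -/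
def augVocab (τ : Vocab) (V : Type) : Vocab := ⟨τ.symb ⊕ V, Sum.elim τ.ar fun _ => 1⟩

def aug {τ : Vocab} {V : Type} (A : Struct τ V) (S : Set V) : Struct (augVocab τ V) V :=
  ⟨fun R => match R with
    | Sum.inl R' => A.rel R'
    | Sum.inr a => {t | a ∈ S ∧ ∀ i, t i = a}⟩

lemma core_endo {τ : Vocab} {V : Type} [Fintype V] (A : Struct τ V) (hA : IsCore A)
    (f : V → V) (hf : IsHom A A f) :
    ∃ e : V ≃ V, ⇑e = f ∧ IsHom A A ⇑e.symm := by
  classical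
  set B : Substruct A :=
    { carrier := Set.range f
      rel := fun R => (fun t i => f (t i)) '' A.rel R
      rel_sub := fun R t ht => by obtain ⟨s, hs, rfl⟩ := ht; exact hf R s hs
      mem_carrier := fun R t ht i => by obtain ⟨s, hs, rfl⟩ := ht; exact ⟨s i, rfl⟩ } with hB
  have hequiv : HomEquiv A B.toStruct := by
    constructor
    · exact ⟨fun x => ⟨f x, x, rfl⟩, fun R t ht => ⟨t, ht, rfl⟩⟩
    · exact ⟨Subtype.val, fun R t ht => B.rel_sub R ht⟩
  have hkey : B.carrier = Set.univ ∧ ∀ R, B.rel R = A.rel R :=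
    not_not.mp (fun hp => hA B hp hequiv)
  have hsurj : Function.Surjective f := fun y => by
    have : y ∈ B.carrier := hkey.1.symm ▸ Set.mem_univ y
    exact this
  have hbij : Function.Bijective f := Finite.surjective_iff_bijective.mp hsurj
  refine ⟨Equiv.ofBijective f hbij, rfl, ?_⟩
  intro R t ht
  rw [← hkey.2 R] at ht
  obtain ⟨s, hs, heq⟩ := ht
  have : (fun i => (Equiv.ofBijective f hbij).symm (t i)) = s := by
    funext i
    have h1 : t i = f (s i) := (congrFun heq i).symm
    rw [h1]
    exact (Equiv.ofBijective f hbij).symm_apply_apply (s i)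
  rw [this]
  exact hs

lemma hom_iterate {τ : Vocab} {V : Type} (A : Struct τ V) (f : V → V) (hf : IsHom A A f) :
    ∀ k, IsHom A A f^[k] := by
  intro k
  induction k with
  | zero => intro R t ht; simpa using ht
  | succ k ih =>
    intro R t ht
    have := ih R _ (hf R t ht)
    simpa [Function.iterate_succ_apply] using this

theorem stmt5 {τ : Vocab} {V : Type} [Fintype V] (A : Struct τ V) (S : Set V)
    (hcore : IsCore (aug A S)) (g : V → V) (hg : IsHom A A g)
    (hgS : g '' S = S) :
    ∃ e : V ≃ V, ⇑e = g ∧ IsHom A A ⇑e.symm := by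
  classical
  -- σ : S → S
  have hmem : ∀ x : S, g x ∈ S := fun x => by have h := Set.mem_image_of_mem g x.2; rwa [hgS] at h
  set σ : S → S := fun x => ⟨g x, hmem x⟩ with hσ
  have hσsurj : Function.Surjective σ := by
    intro y
    have : (y : V) ∈ g '' S := hgS.symm ▸ y.2
    obtain ⟨x, hxS, hgx⟩ := this
    exact ⟨⟨x, hxS⟩, Subtype.ext hgx⟩
  have hσbij : Function.Bijective σ := Finite.surjective_iff_bijective.mp hσsurj
  set p : Equiv.Perm S := Equiv.ofBijective σ hσbij with hp
  obtain ⟨m, hm⟩ := Nat.exists_eq_add_of_lt (orderOf_pos p)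
  have hm' : orderOf p = m + 1 := by omega
  have hpone : p ^ (m + 1) = 1 := hm' ▸ pow_orderOf_eq_one p
  have hiter : ∀ k (x : S), g^[k] ↑x = ↑((p ^ k) x) := by
    intro k
    induction k with
    | zero => intro x; simp
    | succ k ih =>
      intro x
      rw [Function.iterate_succ', Function.comp_apply, ih x, pow_succ']
      rfl
  have hfix : ∀ a ∈ S, g^[m + 1] a = a := by
    intro a ha
    have := hiter (m + 1) ⟨a, ha⟩
    rw [hpone] at this
    simpa using this
  -- g^[n] is a hom of aug A S
  have hgn : IsHom (aug A S) (aug A S) g^[m + 1] := by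
    intro R t ht
    match R with
    | Sum.inl R' => exact hom_iterate A g hg (m + 1) R' t ht
    | Sum.inr a =>
      obtain ⟨haS, hta⟩ := ht
      refine ⟨haS, fun i => ?_⟩
      show g^[m + 1] (t i) = a
      rw [hta i]
      exact hfix a haS
  obtain ⟨en, hen, hensymm⟩ := core_endo (aug A S) hcore g^[m + 1] hgn
  have hgninj : Function.Injective g^[m + 1] := hen ▸ en.injective
  have hginj : Function.Injective g := by
    have : Function.Injective (g^[m] ∘ g) := by
      rwa [Function.iterate_succ] at hgninj
    exact Function.Injective.of_comp this
  have hgbij : Function.Bijective g := Finite.injective_iff_bijective.mp hginj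
  refine ⟨Equiv.ofBijective g hgbij, rfl, ?_⟩
  have hsymm : ⇑(Equiv.ofBijective g hgbij).symm = g^[m] ∘ ⇑en.symm := by
    funext x
    apply hgbij.1
    have h1 : g (g^[m] (en.symm x)) = g^[m + 1] (en.symm x) := by
      rw [Function.iterate_succ', Function.comp_apply]
    rw [Function.comp_apply, h1, ← hen, en.apply_symm_apply]
    exact (Equiv.ofBijective g hgbij).apply_symm_apply x
  rw [hsymm]
  have hensymmA : IsHom A A ⇑en.symm := fun R t ht => hensymm (Sum.inl R) t ht
  intro R t ht
  exact hom_iterate A g hg m R _ (hensymmA R t ht)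
end

section
/- With A, B, D as above and S ⊆ A such that aug(A,S) is a core: there is a bijection between hom(A*, B, S) (maps S → B extendable to homomorphisms from A* to B) and the set N of maps h : S → D with π_1 ∘ h = id_S that extend to homomorphisms from A to D. -/
def Dset {τ : Vocab} {V W : Type} (B : Struct (augVocab τ V) W) : Set (V × W) :=
  {p | (fun _ => p.2) ∈ B.rel (Sum.inr p.1)}

def Dstruct {τ : Vocab} {V W : Type} (A : Struct τ V) (B : Struct (augVocab τ V) W) :
    Struct τ (Dset B) :=
  ⟨fun R => {t | (fun i => (t i).val.1) ∈ A.rel R ∧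
                 (fun i => (t i).val.2) ∈ B.rel (Sum.inl R)}⟩

lemma isHom_iterate {τ : Vocab} {V : Type} {C : Struct τ V} {p : V → V}
    (hp : IsHom C C p) : ∀ n, IsHom C C (p^[n]) := by
  intro n
  induction n with
  | zero => intro R t ht; simpa using ht
  | succ n ih =>
      intro R t ht
      have := hp R _ (ih R t ht)
      simpa [Function.iterate_succ_apply'] using this

lemma core_inj {τ : Vocab} {V : Type} [Fintype V] {C : Struct τ V}
    (hcore : IsCore C) {p : V → V} (hp : IsHom C C p) : Function.Injective p := by
  by_contra hinj
  have hsurj : ¬ Function.Surjective p := fun hs =>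
    hinj (Finite.injective_iff_surjective.mpr hs)
  set Bs : Substruct C :=
    { carrier := Set.range p
      rel := fun R => (fun t i => p (t i)) '' C.rel R
      rel_sub := by rintro R _ ⟨t, ht, rfl⟩; exact hp R t ht
      mem_carrier := by rintro R _ ⟨t, ht, rfl⟩ i; exact ⟨t i, rfl⟩ } with hBs
  refine hcore Bs ?_ ?_
  · rintro ⟨hc, -⟩
    exact hsurj (Set.range_eq_univ.mp hc)
  · constructor
    · refine ⟨fun v => ⟨p v, ⟨v, rfl⟩⟩, ?_⟩
      intro R t ht
      exact ⟨t, ht, rfl⟩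
    · refine ⟨Subtype.val, ?_⟩
      intro R t ht
      exact Bs.rel_sub R ht

lemma core_inverse {τ : Vocab} {V : Type} [Fintype V] {C : Struct τ V}
    (hcore : IsCore C) {p : V → V} (hp : IsHom C C p) :
    ∃ q : V → V, IsHom C C q ∧ (∀ v, p (q v) = v) ∧ (∀ v, q (p v) = v) := by
  have hinj := core_inj hcore hp
  have hbij : Function.Bijective p := ⟨hinj, Finite.injective_iff_surjective.mp hinj⟩
  set e : Equiv.Perm V := Equiv.ofBijective p hbij with he
  have hcoe : ∀ n v, (e ^ n) v = p^[n] v := by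
    intro n
    induction n with
    | zero => intro v; simp
    | succ n ih =>
        intro v
        rw [pow_succ, Function.iterate_succ_apply]
        simp only [Equiv.Perm.mul_apply]
        rw [ih]
        rfl
  have hfin : Finite (Equiv.Perm V) := inferInstance
  have hord : 0 < orderOf e := orderOf_pos e
  have hpow : e ^ orderOf e = 1 := pow_orderOf_eq_one e
  set n := orderOf e with hn
  refine ⟨p^[n - 1], isHom_iterate hp (n - 1), ?_, ?_⟩
  · intro v
    have h2 := Function.iterate_succ_apply' p (n - 1) v
    rw [show (n - 1).succ = n by omega] at h2
    rw [← h2, ← hcoe, hpow]; simp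
  · intro v
    have h2 := Function.iterate_succ_apply p (n - 1) v
    rw [show (n - 1).succ = n by omega] at h2
    rw [← h2, ← hcoe, hpow]; simp

theorem stmt9 {τ : Vocab} {V W : Type} [Fintype V] [Fintype W]
    (A : Struct τ V) (S : Set V) (B : Struct (augVocab τ V) W)
    (hcore : IsCore (aug A S)) :
    Nonempty (↥(homSet (aug A (Set.univ : Set V)) B S) ≃
      ↥{h ∈ homSet A (Dstruct A B) S | ∀ a : S, (h a).val.1 = ↑a}) := by
  classical
  -- forward membership facts
  have fwdDset : ∀ (h : ↥(homSet (aug A (Set.univ : Set V)) B S)) (v : V),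
      ((v, h.2.choose v) : V × W) ∈ Dset B := by
    intro h v
    have hhom := h.2.choose_spec.1
    have ht : (fun _ : Fin ((augVocab τ V).ar (Sum.inr v)) => v) ∈
        (aug A (Set.univ : Set V)).rel (Sum.inr v) := ⟨trivial, fun _ => rfl⟩
    exact hhom (Sum.inr v) _ ht
  refine ⟨{
    toFun := fun h => ⟨fun a => ⟨(a, h.1 a), ?_⟩, ?_, ?_⟩
    invFun := fun g => ⟨fun a => (g.1 a).val.2, ?_⟩
    left_inv := ?_
    right_inv := ?_ }⟩
  · -- (a, h a) ∈ Dset B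
    have := fwdDset h a
    have hspec := h.2.choose_spec.2 a
    simpa [Dset, hspec] using this
  · -- membership in homSet A (Dstruct A B) S
    refine ⟨fun v => ⟨(v, h.2.choose v), fwdDset h v⟩, ?_, ?_⟩
    · intro R t ht
      refine ⟨ht, ?_⟩
      exact h.2.choose_spec.1 (Sum.inl R) t ht
    · intro a
      exact Subtype.ext (Prod.ext rfl (h.2.choose_spec.2 a))
  · intro a; rfl
  · -- the hard direction: membership in homSet (aug A univ) B S
    obtain ⟨hmem, hfix⟩ := g.2
    obtain ⟨g', hg', hg'S⟩ := hmem
    set p : V → V := fun v => (g' v).val.1 with hpdef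
    have hpa : ∀ a (ha : a ∈ S), p a = a := by
      intro a ha
      show (g' a).val.1 = a
      have h1 : g' a = g.1 ⟨a, ha⟩ := hg'S ⟨a, ha⟩
      rw [h1]
      exact hfix ⟨a, ha⟩
    have hphom : IsHom (aug A S) (aug A S) p := by
      intro R t ht
      match R with
      | Sum.inl R' =>
          exact (hg' R' t ht).1
      | Sum.inr a =>
          obtain ⟨haS, hta⟩ := ht
          refine ⟨haS, fun i => ?_⟩
          show p (t i) = a
          rw [hta i]; exact hpa a haS
    obtain ⟨q, hqhom, hpq, hqp⟩ := core_inverse hcore hphom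
    have hqa : ∀ a (ha : a ∈ S), q a = a := by
      intro a ha
      have := hqp a
      rwa [hpa a ha] at this
    have hqA : IsHom A A q := fun R t ht => hqhom (Sum.inl R) t ht
    refine ⟨fun v => (g' (q v)).val.2, ?_, ?_⟩
    · intro R t ht
      match R with
      | Sum.inl R' =>
          have h1 : (fun i => q (t i)) ∈ A.rel R' := hqA R' t ht
          exact (hg' R' _ h1).2
      | Sum.inr a =>
          obtain ⟨-, hta⟩ := ht
          have hconst : (fun i => (g' (q (t i))).val.2) =
              (fun _ => (g' (q a)).val.2) := by
            funext i; rw [hta i]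
          rw [hconst]
          have hd : (fun _ : Fin ((augVocab τ V).ar (Sum.inr (g' (q a)).val.1)) =>
              (g' (q a)).val.2) ∈ B.rel (Sum.inr (g' (q a)).val.1) := (g' (q a)).2
          have h1 : (g' (q a)).val.1 = a := hpq a
          rw [h1] at hd
          exact hd
    · intro a
      show (g' (q ↑a)).val.2 = (g.1 a).val.2
      rw [hqa (↑a) a.2, hg'S a]
  · intro h
    apply Subtype.ext
    funext a
    rfl
  · intro g
    apply Subtype.ext
    funext a
    apply Subtype.ext
    exact Prod.ext (g.2.2 a).symm rfl
end
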